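/- Let k be a field, V a k-vector space, and R a k-linear endomorphism of V⊗V. Then R is a solution of the Hopf equation (R¹²R²³ = R²³R¹³R¹² in End(V⊗V⊗V)) if and only if W := τ∘R∘τ is a solution of the pentagonal equation (W¹²W¹³W²³ = W²³W¹² in End(V⊗V⊗V)), where τ : V⊗V → V⊗V is the flip map τ(v⊗w) = w⊗v. -/

import Mathlib

open TensorProduct LinearMap

section HopfEq

variable (k V : Type*) [Field k] [AddCommGroup V] [Module k V]

/-- The flip map `τ : V ⊗ V → V ⊗ V`, `τ(v ⊗ w) = w ⊗ v`. -/
noncomputable def flipMap : V ⊗[k] V →ₗ[k] V ⊗[k] V :=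
  (TensorProduct.comm k V V).toLinearMap

variable {k V}

/-- `R¹² = R ⊗ I` as an endomorphism of `V ⊗ V ⊗ V`. -/
noncomputable def map12 (R : V ⊗[k] V →ₗ[k] V ⊗[k] V) :
    V ⊗[k] (V ⊗[k] V) →ₗ[k] V ⊗[k] (V ⊗[k] V) :=
  (TensorProduct.assoc k V V V).toLinearMap ∘ₗ R.rTensor V ∘ₗ
    (TensorProduct.assoc k V V V).symm.toLinearMap

/-- `R²³ = I ⊗ R` as an endomorphism of `V ⊗ V ⊗ V`. -/
noncomputable def map23 (R : V ⊗[k] V →ₗ[k] V ⊗[k] V) :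
    V ⊗[k] (V ⊗[k] V) →ₗ[k] V ⊗[k] (V ⊗[k] V) :=
  R.lTensor V

/-- `R¹³ = (I ⊗ τ)(R ⊗ I)(I ⊗ τ)` as an endomorphism of `V ⊗ V ⊗ V`. -/
noncomputable def map13 (R : V ⊗[k] V →ₗ[k] V ⊗[k] V) :
    V ⊗[k] (V ⊗[k] V) →ₗ[k] V ⊗[k] (V ⊗[k] V) :=
  (flipMap k V).lTensor V ∘ₗ map12 R ∘ₗ (flipMap k V).lTensor V

/-- `R` is a solution of the Hopf equation: `R¹²R²³ = R²³R¹³R¹²`. -/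
def IsHopfSolution (R : V ⊗[k] V →ₗ[k] V ⊗[k] V) : Prop :=
  map12 R ∘ₗ map23 R = map23 R ∘ₗ map13 R ∘ₗ map12 R

/-- `R` is a solution of the pentagonal equation: `R¹²R¹³R²³ = R²³R¹²`. -/
def IsPentagonSolution (R : V ⊗[k] V →ₗ[k] V ⊗[k] V) : Prop :=
  map12 R ∘ₗ map13 R ∘ₗ map23 R = map23 R ∘ₗ map12 R

end HopfEq

/-!
Conjugation by the reversal `ρ : x ⊗ y ⊗ z ↦ z ⊗ y ⊗ x` is an algebra automorphism of
`End(V ⊗ V ⊗ V)` sending `R¹²`, `R²³`, `R¹³` to `W²³`, `W¹²`, `W¹³` for `W = τ R τ`.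
It therefore turns the Hopf equation `R¹²R²³ = R²³R¹³R¹²` for `R` into `W²³W¹² = W¹²W¹³W²³`,
which is the pentagonal equation for `W`.
-/

section Reverse

variable {k V : Type*} [CommSemiring k] [AddCommMonoid V] [Module k V]

noncomputable def tensorReverse : V ⊗[k] (V ⊗[k] V) ≃ₗ[k] V ⊗[k] (V ⊗[k] V) :=
  (TensorProduct.assoc k V V V).symm ≪≫ₗ TensorProduct.comm k (V ⊗[k] V) V ≪≫ₗ
    (TensorProduct.comm k V V).lTensor V

@[simp] lemma tensorReverse_tmul (x y z : V) :
    tensorReverse (x ⊗ₜ[k] (y ⊗ₜ[k] z)) = z ⊗ₜ (y ⊗ₜ x) := rfl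

@[simp] lemma tensorReverse_symm_tmul (x y z : V) :
    tensorReverse.symm (x ⊗ₜ[k] (y ⊗ₜ[k] z)) = z ⊗ₜ (y ⊗ₜ x) :=
  (LinearEquiv.symm_apply_eq _).mpr rfl

lemma tensorReverse_tmul_eq_assoc (x : V) (t : V ⊗[k] V) :
    tensorReverse (x ⊗ₜ t) = TensorProduct.assoc k V V V (TensorProduct.comm k V V t ⊗ₜ x) := by
  induction t using TensorProduct.induction_on with
  | zero => simp
  | tmul y z => rfl
  | add s t hs ht => simp only [tmul_add, add_tmul, map_add, hs, ht]

lemma tensorReverse_assoc_tmul (t : V ⊗[k] V) (z : V) :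
    tensorReverse (TensorProduct.assoc k V V V (t ⊗ₜ z)) = z ⊗ₜ TensorProduct.comm k V V t := by
  induction t using TensorProduct.induction_on with
  | zero => simp
  | tmul x y => rfl
  | add s t hs ht => simp only [add_tmul, tmul_add, map_add, hs, ht]

lemma tensorReverse_lTensor_comm_assoc_tmul (t : V ⊗[k] V) (y : V) :
    tensorReverse ((TensorProduct.comm k V V).toLinearMap.lTensor V
        (TensorProduct.assoc k V V V (t ⊗ₜ y))) =
      (TensorProduct.comm k V V).toLinearMap.lTensor V
        (TensorProduct.assoc k V V V (TensorProduct.comm k V V t ⊗ₜ y)) := by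
  induction t using TensorProduct.induction_on with
  | zero => simp
  | tmul x y => rfl
  | add s t hs ht => simp only [add_tmul, map_add, hs, ht]

end Reverse

section Conj

variable {k V : Type*} [Field k] [AddCommGroup V] [Module k V]

lemma tensorReverse_conj_map12 (R : V ⊗[k] V →ₗ[k] V ⊗[k] V) :
    tensorReverse.conj (map12 R) = map23 (flipMap k V ∘ₗ R ∘ₗ flipMap k V) := by
  ext x y z
  simp [map12, map23, flipMap, tensorReverse_assoc_tmul]

lemma tensorReverse_conj_map23 (R : V ⊗[k] V →ₗ[k] V ⊗[k] V) :
    tensorReverse.conj (map23 R) = map12 (flipMap k V ∘ₗ R ∘ₗ flipMap k V) := by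
  ext x y z
  simp [map12, map23, flipMap, tensorReverse_tmul_eq_assoc]

lemma tensorReverse_conj_map13 (R : V ⊗[k] V →ₗ[k] V ⊗[k] V) :
    tensorReverse.conj (map13 R) = map13 (flipMap k V ∘ₗ R ∘ₗ flipMap k V) := by
  ext x y z
  simp [map13, map12, flipMap, tensorReverse_lTensor_comm_assoc_tmul]

end Conj

theorem hopf_iff_flip_pentagon (k V : Type*) [Field k] [AddCommGroup V] [Module k V]
    (R : V ⊗[k] V →ₗ[k] V ⊗[k] V) :
    IsHopfSolution R ↔ IsPentagonSolution (flipMap k V ∘ₗ R ∘ₗ flipMap k V) := by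
  rw [IsHopfSolution, IsPentagonSolution, ← tensorReverse.conj.injective.eq_iff]
  simp only [LinearEquiv.conj_comp, tensorReverse_conj_map12, tensorReverse_conj_map23,
    tensorReverse_conj_map13]
  exact eq_comm
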